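/- arXiv:2403.10991 — 3 statements merged into one kernel-verified Lean document; each statement's English description precedes it below -/
import Mathlib

section
/- Let V be a finite set and let h₁, h₂ : Finset V → ℝ be set functions that are supermodular, non-decreasing, and non-negative. Then the pointwise product h₁·h₂ (defined by (h₁·h₂)(A) = h₁(A)·h₂(A)) is supermodular, non-decreasing, and non-negative. -/
/-- A set function `f : Finset V → ℝ` is supermodular: for all `A ⊆ B` and `v ∉ B`,
`f(A ∪ {v}) − f(A) ≤ f(B ∪ {v}) − f(B)`. -/
def Supermodular {V : Type*} [DecidableEq V] (f : Finset V → ℝ) : Prop :=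
  ∀ A B : Finset V, A ⊆ B → ∀ v ∉ B, f (insert v A) - f A ≤ f (insert v B) - f B

/-- A set function is non-decreasing. -/
def NonDecreasing {V : Type*} (f : Finset V → ℝ) : Prop :=
  ∀ A B : Finset V, A ⊆ B → f A ≤ f B

/-- A set function is non-negative. -/
def NonNeg {V : Type*} (f : Finset V → ℝ) : Prop :=
  ∀ A : Finset V, 0 ≤ f A

/-! The marginal gain of `f * g` at `S` splits as `f (S + v) · Δg(S) + g(S) · Δf(S)`; each factor
is non-negative and grows from `A` to `B ⊇ A`, by monotonicity, non-negativity and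
supermodularity of `f` and `g`. -/

namespace NonNeg

variable {V : Type*} {f g : Finset V → ℝ}

theorem mul (hf : NonNeg f) (hg : NonNeg g) : NonNeg (fun A => f A * g A) :=
  fun A => mul_nonneg (hf A) (hg A)

end NonNeg

namespace NonDecreasing

variable {V : Type*} {f g : Finset V → ℝ}

theorem mul (hfm : NonDecreasing f) (hf : NonNeg f) (hgm : NonDecreasing g) (hg : NonNeg g) :
    NonDecreasing (fun A => f A * g A) :=
  fun A B hAB => mul_le_mul (hfm A B hAB) (hgm A B hAB) (hg A) (hf B)

theorem sub_nonneg_insert [DecidableEq V] (hf : NonDecreasing f) (v : V) (S : Finset V) :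
    0 ≤ f (insert v S) - f S :=
  sub_nonneg.mpr (hf S _ (Finset.subset_insert v S))

end NonDecreasing

namespace Supermodular

variable {V : Type*} [DecidableEq V] {f g : Finset V → ℝ}

theorem mul (hfs : Supermodular f) (hfm : NonDecreasing f) (hf : NonNeg f)
    (hgs : Supermodular g) (hgm : NonDecreasing g) (hg : NonNeg g) :
    Supermodular (fun A => f A * g A) := by
  intro A B hAB v hv
  have gain_split : ∀ S : Finset V, f (insert v S) * g (insert v S) - f S * g S =
      f (insert v S) * (g (insert v S) - g S) + g S * (f (insert v S) - f S) :=
    fun S => by ring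
  show f (insert v A) * g (insert v A) - f A * g A ≤ f (insert v B) * g (insert v B) - f B * g B
  rw [gain_split A, gain_split B]
  exact add_le_add
    (mul_le_mul (hfm _ _ (Finset.insert_subset_insert v hAB)) (hgs A B hAB v hv)
      (hgm.sub_nonneg_insert v A) (hf _))
    (mul_le_mul (hgm A B hAB) (hfs A B hAB v hv) (hfm.sub_nonneg_insert v A) (hg B))

end Supermodular

theorem product_of_supermodular_nondecreasing_nonneg_general
    {V : Type*} [DecidableEq V] (h₁ h₂ : Finset V → ℝ)
    (hs₁ : Supermodular h₁) (hm₁ : NonDecreasing h₁) (hn₁ : NonNeg h₁)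
    (hs₂ : Supermodular h₂) (hm₂ : NonDecreasing h₂) (hn₂ : NonNeg h₂) :
    Supermodular (fun A => h₁ A * h₂ A) ∧
      NonDecreasing (fun A => h₁ A * h₂ A) ∧
      NonNeg (fun A => h₁ A * h₂ A) :=
  ⟨hs₁.mul hm₁ hn₁ hs₂ hm₂ hn₂, hm₁.mul hn₁ hm₂ hn₂, hn₁.mul hn₂⟩

theorem product_of_supermodular_nondecreasing_nonneg
    {V : Type*} [Fintype V] [DecidableEq V] (h₁ h₂ : Finset V → ℝ)
    (hs₁ : Supermodular h₁) (hm₁ : NonDecreasing h₁) (hn₁ : NonNeg h₁)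
    (hs₂ : Supermodular h₂) (hm₂ : NonDecreasing h₂) (hn₂ : NonNeg h₂) :
    Supermodular (fun A => h₁ A * h₂ A) ∧
      NonDecreasing (fun A => h₁ A * h₂ A) ∧
      NonNeg (fun A => h₁ A * h₂ A) :=
  product_of_supermodular_nondecreasing_nonneg_general h₁ h₂ hs₁ hm₁ hn₁ hs₂ hm₂ hn₂
end

section
/- Let V be a finite set and let h₁, h₂ : Finset V → ℝ be set functions that are supermodular, non-increasing, and non-negative. Then the pointwise product h₁·h₂ (defined by (h₁·h₂)(A) = h₁(A)·h₂(A)) is supermodular, non-increasing, and non-negative. -/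
/-- A set function is non-increasing. -/
def NonIncreasing {V : Type*} (f : Finset V → ℝ) : Prop :=
  ∀ A B : Finset V, A ⊆ B → f B ≤ f A

/-! A marginal gain of `f * g` splits as `Δf · g + f · Δg`. For non-increasing functions each
marginal gain is non-positive and increases with the base set, while the non-negative factors
decrease, so each summand is a product of a non-positive increasing and a non-negative decreasing
quantity, hence increasing. -/

theorem NonNeg.mul_s1 {V : Type*} {f g : Finset V → ℝ} (hf : NonNeg f) (hg : NonNeg g) :
    NonNeg (fun A => f A * g A) :=
  fun A => mul_nonneg (hf A) (hg A)

theorem NonIncreasing.mul_s1 {V : Type*} {f g : Finset V → ℝ} (hf : NonIncreasing f)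
    (hg : NonIncreasing g) (hf₀ : NonNeg f) (hg₀ : NonNeg g) :
    NonIncreasing (fun A => f A * g A) :=
  fun A B hAB => mul_le_mul (hf A B hAB) (hg A B hAB) (hg₀ B) (hf₀ A)

theorem NonIncreasing.insert_sub_nonpos {V : Type*} [DecidableEq V] {f : Finset V → ℝ}
    (hf : NonIncreasing f) (A : Finset V) (v : V) : f (insert v A) - f A ≤ 0 :=
  sub_nonpos.mpr (hf A _ (Finset.subset_insert v A))

theorem Supermodular.mul_s1 {V : Type*} [DecidableEq V] {f g : Finset V → ℝ}
    (hf : Supermodular f) (hg : Supermodular g) (hf' : NonIncreasing f) (hg' : NonIncreasing g)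
    (hf₀ : NonNeg f) (hg₀ : NonNeg g) :
    Supermodular (fun A => f A * g A) := by
  intro A B hAB v hv
  have product_rule : ∀ C, f (insert v C) * g (insert v C) - f C * g C =
      (f (insert v C) - f C) * g (insert v C) + f C * (g (insert v C) - g C) :=
    fun C => by ring
  simp only [product_rule]
  exact add_le_add
    (mul_le_mul_of_nonpos_of_nonneg (hf A B hAB v hv)
      (hg' _ _ (Finset.insert_subset_insert v hAB)) (hf'.insert_sub_nonpos B v) (hg₀ _))
    (mul_le_mul_of_nonneg_of_nonpos' (hf' A B hAB) (hg A B hAB v hv) (hf₀ A)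
      (hg'.insert_sub_nonpos B v))

theorem product_of_supermodular_nonincreasing_nonneg_general
    {V : Type*} [DecidableEq V] (h₁ h₂ : Finset V → ℝ)
    (hs₁ : Supermodular h₁) (hm₁ : NonIncreasing h₁) (hn₁ : NonNeg h₁)
    (hs₂ : Supermodular h₂) (hm₂ : NonIncreasing h₂) (hn₂ : NonNeg h₂) :
    Supermodular (fun A => h₁ A * h₂ A) ∧
      NonIncreasing (fun A => h₁ A * h₂ A) ∧
      NonNeg (fun A => h₁ A * h₂ A) :=
  ⟨hs₁.mul_s1 hs₂ hm₁ hm₂ hn₁ hn₂, hm₁.mul_s1 hm₂ hn₁ hn₂, hn₁.mul_s1 hn₂⟩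

theorem product_of_supermodular_nonincreasing_nonneg
    {V : Type*} [Fintype V] [DecidableEq V] (h₁ h₂ : Finset V → ℝ)
    (hs₁ : Supermodular h₁) (hm₁ : NonIncreasing h₁) (hn₁ : NonNeg h₁)
    (hs₂ : Supermodular h₂) (hm₂ : NonIncreasing h₂) (hn₂ : NonNeg h₂) :
    Supermodular (fun A => h₁ A * h₂ A) ∧
      NonIncreasing (fun A => h₁ A * h₂ A) ∧
      NonNeg (fun A => h₁ A * h₂ A) :=
  product_of_supermodular_nonincreasing_nonneg_general h₁ h₂ hs₁ hm₁ hn₁ hs₂ hm₂ hn₂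
end

section
/- Let V be a finite set, (Ω, μ) a measure space, φ : Ω → ℝ a non-negative integrable function, and q : V → Ω → ℝ a family of measurable functions with 0 ≤ q(i)(x) ≤ 1 for all i ∈ V and x ∈ Ω. Then the set function h(A) = ∫_Ω φ(x) · (1 − ∏_{i ∈ A} (1 − q(i)(x))) dμ(x) is well-defined (the integrand is integrable for every A ⊆ V), submodular, non-decreasing, and non-negative. -/
/-!
For a fixed point `x`, the joint detection probability `A ↦ 1 - ∏ i ∈ A, (1 - q i x)` has
marginal gain `q v x * ∏ i ∈ A, (1 - q i x)` when `v` is added to `A`; since every factor lies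
in `[0, 1]`, this gain shrinks as `A` grows, which is submodularity. Multiplying by the weight
`φ x ≥ 0` and integrating preserves submodularity, monotonicity and non-negativity, and the
integrand is dominated by `|φ|`.
-/

open MeasureTheory

/-- A set function `f : Finset V → ℝ` is submodular: for all `A ⊆ B` and `v ∉ B`,
`f(A ∪ {v}) − f(A) ≥ f(B ∪ {v}) − f(B)`. -/
def Submodular {V : Type*} [DecidableEq V] (f : Finset V → ℝ) : Prop :=
  ∀ A B : Finset V, A ⊆ B → ∀ v ∉ B, f (insert v B) - f B ≤ f (insert v A) - f A

open Finset

section SetFunction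

variable {V : Type*} {f : Finset V → ℝ} {c : ℝ}

theorem Submodular.const_mul [DecidableEq V] (h : Submodular f) (hc : 0 ≤ c) :
    Submodular fun A => c * f A := by
  intro A B hAB v hv
  simpa only [mul_sub] using mul_le_mul_of_nonneg_left (h A B hAB v hv) hc

theorem NonDecreasing.const_mul (h : NonDecreasing f) (hc : 0 ≤ c) :
    NonDecreasing fun A => c * f A :=
  fun A B hAB => mul_le_mul_of_nonneg_left (h A B hAB) hc

theorem NonNeg.const_mul (h : NonNeg f) (hc : 0 ≤ c) : NonNeg fun A => c * f A :=
  fun A => mul_nonneg hc (h A)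

end SetFunction

section Integral

variable {V Ω : Type*} [MeasurableSpace Ω] {μ : Measure Ω} {F : Finset V → Ω → ℝ}

theorem submodular_integral [DecidableEq V] (hF : ∀ A, Integrable (F A) μ)
    (h : ∀ x, Submodular fun A => F A x) : Submodular fun A => ∫ x, F A x ∂μ := by
  intro A B hAB v hv
  rw [← integral_sub (hF _) (hF _), ← integral_sub (hF _) (hF _)]
  exact integral_mono ((hF _).sub (hF _)) ((hF _).sub (hF _)) fun x => h x A B hAB v hv

theorem nonDecreasing_integral (hF : ∀ A, Integrable (F A) μ)
    (h : ∀ x, NonDecreasing fun A => F A x) : NonDecreasing fun A => ∫ x, F A x ∂μ :=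
  fun A B hAB => integral_mono (hF A) (hF B) fun x => h x A B hAB

theorem nonNeg_integral (h : ∀ x, NonNeg fun A => F A x) : NonNeg fun A => ∫ x, F A x ∂μ :=
  fun A => integral_nonneg fun x => h x A

end Integral

/-- The joint detection probability `Pr(x, p)` of the robots in `A`, robot `i` detecting
independently with probability `p i`. -/
def coverage {V : Type*} (p : V → ℝ) (A : Finset V) : ℝ :=
  1 - ∏ i ∈ A, (1 - p i)

section Coverage

variable {V : Type*} {p : V → ℝ}

theorem coverage_insert_sub [DecidableEq V] {A : Finset V} {v : V} (hv : v ∉ A) :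
    coverage p (insert v A) - coverage p A = p v * ∏ i ∈ A, (1 - p i) := by
  rw [coverage, coverage, prod_insert hv]
  ring

theorem coverage_le_one (hp₁ : ∀ i, p i ≤ 1) (A : Finset V) : coverage p A ≤ 1 :=
  sub_le_self 1 (prod_nonneg fun i _ => sub_nonneg.2 (hp₁ i))

variable (hp₀ : ∀ i, 0 ≤ p i) (hp₁ : ∀ i, p i ≤ 1)
include hp₀ hp₁

theorem antitone_prod_one_sub : Antitone fun A : Finset V => ∏ i ∈ A, (1 - p i) :=
  prod_anti_set_of_le_one (fun i => sub_nonneg.2 (hp₁ i)) fun i => sub_le_self _ (hp₀ i)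

theorem submodular_coverage [DecidableEq V] : Submodular (coverage p) := by
  intro A B hAB v hv
  rw [coverage_insert_sub hv, coverage_insert_sub fun hvA => hv (hAB hvA)]
  exact mul_le_mul_of_nonneg_left (antitone_prod_one_sub hp₀ hp₁ hAB) (hp₀ v)

theorem nonDecreasing_coverage : NonDecreasing (coverage p) :=
  fun _ _ hAB => sub_le_sub_left (antitone_prod_one_sub hp₀ hp₁ hAB) 1

theorem nonNeg_coverage : NonNeg (coverage p) := fun A => by
  simpa [coverage] using antitone_prod_one_sub hp₀ hp₁ A.empty_subset

end Coverage

theorem measurable_coverage {V Ω : Type*} [MeasurableSpace Ω] {q : V → Ω → ℝ}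
    (hq : ∀ i, Measurable (q i)) (A : Finset V) :
    Measurable fun x => coverage (fun i => q i x) A :=
  measurable_const.sub (measurable_prod A fun i _ => measurable_const.sub (hq i))

theorem coverage_integral_submodular_general
    {V : Type*} [DecidableEq V]
    {Ω : Type*} [MeasurableSpace Ω] (μ : Measure Ω)
    (φ : Ω → ℝ) (hφ_int : Integrable φ μ) (hφ_nonneg : ∀ x : Ω, 0 ≤ φ x)
    (q : V → Ω → ℝ) (hq_meas : ∀ i : V, Measurable (q i))
    (hq_range : ∀ (i : V) (x : Ω), 0 ≤ q i x ∧ q i x ≤ 1) :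
    (∀ A : Finset V,
        Integrable (fun x => φ x * (1 - ∏ i ∈ A, (1 - q i x))) μ) ∧
      Submodular
        (fun A : Finset V => ∫ x, φ x * (1 - ∏ i ∈ A, (1 - q i x)) ∂μ) ∧
      NonDecreasing
        (fun A : Finset V => ∫ x, φ x * (1 - ∏ i ∈ A, (1 - q i x)) ∂μ) ∧
      NonNeg
        (fun A : Finset V => ∫ x, φ x * (1 - ∏ i ∈ A, (1 - q i x)) ∂μ) := by
  have hq₀ (x : Ω) (i : V) : 0 ≤ q i x := (hq_range i x).1
  have hq₁ (x : Ω) (i : V) : q i x ≤ 1 := (hq_range i x).2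
  have hint (A : Finset V) : Integrable (fun x => φ x * coverage (fun i => q i x) A) μ :=
    hφ_int.mul_bdd (measurable_coverage hq_meas A).aestronglyMeasurable <| ae_of_all _ fun x =>
      (Real.norm_of_nonneg (nonNeg_coverage (hq₀ x) (hq₁ x) A)).trans_le
        (coverage_le_one (hq₁ x) A)
  refine ⟨hint, submodular_integral hint fun x => ?_, nonDecreasing_integral hint fun x => ?_,
    nonNeg_integral fun x => ?_⟩
  · exact (submodular_coverage (hq₀ x) (hq₁ x)).const_mul (hφ_nonneg x)
  · exact (nonDecreasing_coverage (hq₀ x) (hq₁ x)).const_mul (hφ_nonneg x)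
  · exact (nonNeg_coverage (hq₀ x) (hq₁ x)).const_mul (hφ_nonneg x)

/-- The single-step event coverage objective
`h(A) = ∫ φ(x) (1 − ∏_{i ∈ A} (1 − q i x)) dμ` is well defined (integrable
integrand), submodular, non-decreasing, and non-negative. -/
theorem coverage_integral_submodular
    {V : Type*} [Fintype V] [DecidableEq V]
    {Ω : Type*} [MeasurableSpace Ω] (μ : Measure Ω)
    (φ : Ω → ℝ) (hφ_int : Integrable φ μ) (hφ_nonneg : ∀ x : Ω, 0 ≤ φ x)
    (q : V → Ω → ℝ) (hq_meas : ∀ i : V, Measurable (q i))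
    (hq_range : ∀ (i : V) (x : Ω), 0 ≤ q i x ∧ q i x ≤ 1) :
    (∀ A : Finset V,
        Integrable (fun x => φ x * (1 - ∏ i ∈ A, (1 - q i x))) μ) ∧
      Submodular
        (fun A : Finset V => ∫ x, φ x * (1 - ∏ i ∈ A, (1 - q i x)) ∂μ) ∧
      NonDecreasing
        (fun A : Finset V => ∫ x, φ x * (1 - ∏ i ∈ A, (1 - q i x)) ∂μ) ∧
      NonNeg
        (fun A : Finset V => ∫ x, φ x * (1 - ∏ i ∈ A, (1 - q i x)) ∂μ) :=
  coverage_integral_submodular_general μ φ hφ_int hφ_nonneg q hq_meas hq_range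
end
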